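/- arXiv:2502.13904 — 2 statements merged into one kernel-verified Lean document; each statement's English description precedes it below -/
import Mathlib

section
/- Let G be a Lie group acting smoothly and properly on ℝ by translations. Then the kernel N of the action (elements acting trivially) is a compact normal subgroup of G, and G is isomorphic to a semidirect product N ⋊ L, where L is either the trivial group, ℤ, or ℝ. -/
open scoped Manifold

open Set

section Aux

variable {G : Type*} [Group G]

theorem aux_splitting {H : Type*} [Group H] (d : G →* H) (σ : H →* G)
    (hσ : ∀ h, d (σ h) = h) :
    ∃ Ψ : H →* MulAut d.ker, Nonempty (G ≃* d.ker ⋊[Ψ] H) := by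
  haveI : d.ker.Normal := d.normal_ker
  refine ⟨MulAut.conjNormal.comp σ, ⟨?_⟩⟩
  have compat : ∀ h : H, (d.ker.subtype).comp ((MulAut.conjNormal.comp σ h).toMonoidHom)
      = (MulAut.conj (σ h)).toMonoidHom.comp d.ker.subtype := by
    intro h; ext n; simp [MulAut.conjNormal_apply]
  let Φ : d.ker ⋊[MulAut.conjNormal.comp σ] H →* G :=
    SemidirectProduct.lift d.ker.subtype σ compat
  have hinj : Function.Injective Φ := by
    refine (injective_iff_map_eq_one Φ).mpr ?_
    rintro ⟨n, h⟩ hx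
    have hx' : (n : G) * σ h = 1 := hx
    have h1 : h = 1 := by
      have := congrArg d hx'
      simpa [hσ, n.2, MonoidHom.mem_ker.mp n.2] using this
    subst h1
    have : (n : G) = 1 := by simpa using hx'
    ext <;> simp_all
  have hsurj : Function.Surjective Φ := by
    intro g
    refine ⟨⟨⟨g * (σ (d g))⁻¹, ?_⟩, d g⟩, ?_⟩
    · simp [MonoidHom.mem_ker, hσ]
    · show g * (σ (d g))⁻¹ * σ (d g) = g
      simp
  exact (MulEquiv.ofBijective Φ ⟨hinj, hsurj⟩).symm

theorem aux_free_section (f : G → ℝ) (f_mul : ∀ g h : G, f (g * h) = f g + f h)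
    (A : Subgroup G) (hAcomm : ∀ x ∈ A, ∀ y ∈ A, x * y = y * x)
    (hsurjA : ∀ r : ℝ, ∃ g, g ∈ A ∧ f g = r) (T : Finset ℝ) :
    ∃ s : ℝ → G, (∀ r, s r ∈ A ∧ f (s r) = r) ∧
      ∀ r ∈ AddSubgroup.closure (T : Set ℝ), ∀ r' ∈ AddSubgroup.closure (T : Set ℝ),
        s (r + r') = s r * s r' := by
  classical
  have f_one : f 1 = 0 := by
    have := f_mul 1 1; simpa using this
  set Γ : AddSubgroup ℝ := AddSubgroup.closure (T : Set ℝ) with hΓ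
  have hΓfg : Γ.FG := ⟨T, rfl⟩
  haveI : AddGroup.FG ↥Γ := (AddGroup.fg_iff_addSubgroup_fg Γ).mpr hΓfg
  haveI : Module.Finite ℤ ↥Γ := Module.Finite.iff_addGroup_fg.mpr ‹_›
  haveI : NoZeroSMulDivisors ℤ ↥Γ := by
    constructor
    intro k x h
    have hc : (k : ℝ) * (x : ℝ) = 0 := by
      have := congrArg (fun y : ↥Γ => (y : ℝ)) h
      push_cast at this
      simpa [zsmul_eq_mul] using this
    rcases mul_eq_zero.mp hc with h1 | h2
    · exact Or.inl (by exact_mod_cast h1)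
    · exact Or.inr (by ext; simpa using h2)
  haveI : Module.Free ℤ ↥Γ := Module.free_of_finite_type_torsion_free'
  letI instA : CommGroup ↥A :=
    { (inferInstance : Group ↥A) with
      mul_comm := fun x y => Subtype.ext (hAcomm x.1 x.2 y.1 y.2) }
  set b := Module.Free.chooseBasis ℤ ↥Γ with hb
  set w : Module.Free.ChooseBasisIndex ℤ ↥Γ → G := fun i => (hsurjA (b i : ℝ)).choose with hw
  have hwspec : ∀ i, w i ∈ A ∧ f (w i) = (b i : ℝ) := fun i => (hsurjA (b i : ℝ)).choose_spec
  set av : Module.Free.ChooseBasisIndex ℤ ↥Γ → Additive ↥A :=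
    fun i => Additive.ofMul (⟨w i, (hwspec i).1⟩ : ↥A) with hav
  set l : ↥Γ →ₗ[ℤ] Additive ↥A := b.constr ℤ av with hl
  set F : Additive ↥A →+ ℝ :=
    { toFun := fun x => f ((Additive.toMul x : ↥A) : G)
      map_zero' := by simpa using f_one
      map_add' := fun x y => by
        simpa using f_mul ((Additive.toMul x : ↥A) : G) ((Additive.toMul y : ↥A) : G) } with hF
  have hval : ∀ γ : ↥Γ, F (l γ) = (γ : ℝ) := by
    have : F.toIntLinearMap.comp l = Γ.subtype.toIntLinearMap := by
      refine b.ext fun i => ?_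
      simp only [LinearMap.comp_apply, hl, Module.Basis.constr_basis]
      show F (av i) = (b i : ℝ)
      simpa [hav, hF] using (hwspec i).2
    intro γ
    exact DFunLike.congr_fun (congrArg LinearMap.toAddMonoidHom this) γ
  set s : ℝ → G := fun r =>
    if h : r ∈ Γ then ((Additive.toMul (l ⟨r, h⟩) : ↥A) : G) else (hsurjA r).choose with hs
  refine ⟨s, ?_, ?_⟩
  · intro r
    by_cases h : r ∈ Γ
    · simp only [hs, dif_pos h]
      exact ⟨(Additive.toMul (l ⟨r, h⟩) : ↥A).2, hval ⟨r, h⟩⟩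
    · simp only [hs, dif_neg h]
      exact (hsurjA r).choose_spec
  · intro r hr r' hr'
    have hsum : r + r' ∈ Γ := add_mem hr hr'
    simp only [hs, dif_pos hr, dif_pos hr', dif_pos hsum]
    have : (⟨r + r', hsum⟩ : ↥Γ) = ⟨r, hr⟩ + ⟨r', hr'⟩ := by ext; rfl
    rw [this, map_add]
    rfl

variable [TopologicalSpace G] [IsTopologicalGroup G] [T2Space G]

theorem aux_dyadic (f : G → ℝ)
    (hcomp : ∀ K : Set ℝ, IsCompact K → IsCompact (f ⁻¹' K))
    (hsurjd : ∀ n : ℕ, ∃ g : G, f g = (1/2 : ℝ)^n)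
    (f_pow : ∀ (g : G) (n : ℕ), f (g ^ n) = n * f g) :
    ∃ s : ℕ → G, (∀ n, f (s n) = (1/2 : ℝ)^n) ∧ ∀ n, s (n+1) * s (n+1) = s n := by
  classical
  set X : ℕ → Set G := fun n => f ⁻¹' {(1/2 : ℝ)^n} with hX
  have hXc : ∀ n, IsCompact (X n) := fun n => hcomp _ isCompact_singleton
  have hXne : ∀ n, (X n).Nonempty := fun n => hsurjd n
  have key : (Set.pi univ X ∩ ⋂ n : ℕ, {s : ℕ → G | s (n+1) * s (n+1) = s n}).Nonempty := by
    refine (isCompact_univ_pi hXc).inter_iInter_nonempty _ (fun n => isClosed_eq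
      ((continuous_apply (n+1)).mul (continuous_apply (n+1))) (continuous_apply n)) ?_
    intro u
    set N : ℕ := u.sup id + 1 with hN
    obtain ⟨h, hh⟩ := hsurjd N
    refine ⟨fun n => if n ≤ N then h ^ (2^(N-n)) else (hXne n).choose, ?_, ?_⟩
    · rw [Set.mem_univ_pi]
      intro n
      by_cases hn : n ≤ N
      · simp only [if_pos hn, hX, Set.mem_preimage, Set.mem_singleton_iff]
        rw [f_pow, hh]
        have h1 : (N - n) + n = N := Nat.sub_add_cancel hn
        have : ((1:ℝ)/2)^N = (1/2)^(N-n) * (1/2)^n := by rw [← pow_add, h1]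
        rw [this, ← mul_assoc]
        push_cast
        rw [← mul_pow]
        norm_num
      · simpa only [if_neg hn] using (hXne n).choose_spec
    · simp only [Set.mem_iInter]
      intro n hn
      have hnN : n + 1 ≤ N := by
        have := Finset.le_sup (f := id) hn
        simp only [id] at this
        omega
      simp only [Set.mem_setOf_eq, if_pos hnN, if_pos (by omega : n ≤ N)]
      rw [← pow_add]
      congr 1
      have h2 : N - n = (N - (n+1)) + 1 := by omega
      rw [h2, pow_succ]
      omega
  obtain ⟨s, hs1, hs2⟩ := key
  rw [Set.mem_univ_pi] at hs1
  simp only [Set.mem_iInter, Set.mem_setOf_eq] at hs2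
  exact ⟨s, fun n => hs1 n, hs2⟩

theorem aux_comm_closure (B : Subgroup G) (h : ∀ x ∈ B, ∀ y ∈ B, x * y = y * x) :
    ∀ x ∈ B.topologicalClosure, ∀ y ∈ B.topologicalClosure, x * y = y * x := by
  have step1 : ∀ y ∈ B, ∀ x ∈ B.topologicalClosure, x * y = y * x := by
    intro y hy x hx
    have : (B : Set G) ⊆ {x | x * y = y * x} :=
      fun z hz => h z hz y hy
    have hcl : closure (B : Set G) ⊆ {x | x * y = y * x} :=
      closure_minimal this (isClosed_eq (continuous_mul_right y) (continuous_mul_left y))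
    exact hcl hx
  intro x hx y hy
  have : (B : Set G) ⊆ {z | x * z = z * x} :=
    fun z hz => show x * z = z * x from step1 z hz x hx
  have hcl : closure (B : Set G) ⊆ {z | x * z = z * x} :=
    closure_minimal this (isClosed_eq (continuous_mul_left x) (continuous_mul_right x))
  exact hcl hy

theorem aux_section (c : G →* Multiplicative ℝ)
    (hcont : Continuous fun g : G => Multiplicative.toAdd (c g))
    (hcomp : ∀ K : Set ℝ, IsCompact K →
      IsCompact ((fun g : G => Multiplicative.toAdd (c g)) ⁻¹' K))
    (hsurj : ∀ r : ℝ, ∃ g : G, Multiplicative.toAdd (c g) = r) :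
    ∃ σ : Multiplicative ℝ →* G, ∀ r, c (σ r) = r := by
  classical
  set f : G → ℝ := fun g => Multiplicative.toAdd (c g) with hf
  have f_mul : ∀ g h : G, f (g * h) = f g + f h := by
    intro g h; simp [hf]
  have f_one : f 1 = 0 := by simp [hf]
  have f_inv : ∀ g : G, f g⁻¹ = - f g := by intro g; simp [hf]
  have f_pow : ∀ (g : G) (n : ℕ), f (g ^ n) = n * f g := by
    intro g n; simp [hf, toAdd_pow, nsmul_eq_mul]
  obtain ⟨s, hs1, hs2⟩ := aux_dyadic f hcomp (fun n => hsurj _) f_pow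
  have hkey : ∀ k n : ℕ, s n = s (n + k) ^ (2^k) := by
    intro k
    induction k with
    | zero => intro n; simp
    | succ k ih =>
      intro n
      have h1 : s n = s (n + k) ^ (2^k) := ih n
      have h2 : s (n + k) = s (n + k + 1) * s (n + k + 1) := (hs2 (n + k)).symm
      rw [h1, h2, ← sq, ← pow_mul]
      have : n + (k + 1) = n + k + 1 := by omega
      rw [this]
      congr 1
      rw [pow_succ]
      omega
  have hcomm : ∀ a b : ℕ, Commute (s a) (s b) := by
    have base : ∀ a b : ℕ, a ≤ b → Commute (s a) (s b) := by
      intro a b hab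
      have : s a = s b ^ (2^(b - a)) := by
        have := hkey (b - a) a
        rwa [Nat.add_sub_cancel' hab] at this
      rw [this]
      exact (Commute.refl (s b)).pow_left _
    intro a b
    rcases le_total a b with h | h
    · exact base a b h
    · exact (base b a h).symm
  set B : Subgroup G := Subgroup.closure (Set.range s) with hB
  have hBcomm : ∀ x ∈ B, ∀ y ∈ B, x * y = y * x := by
    intro x hx y hy
    refine Subgroup.closure_induction₂ ?_ ?_ ?_ ?_ ?_ ?_ ?_ hx hy
      (p := fun x y _ _ => Commute x y)
    · rintro _ _ ⟨a, rfl⟩ ⟨b, rfl⟩; exact hcomm a b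
    · intro x _; exact Commute.one_left x
    · intro x _; exact Commute.one_right x
    · intro x y z _ _ _ h1 h2; exact h1.mul_left h2
    · intro y z x _ _ _ h1 h2; exact h1.mul_right h2
    · intro x y _ _ h1; exact h1.inv_left
    · intro x y _ _ h1; exact h1.inv_right
  set A : Subgroup G := B.topologicalClosure with hA
  have hAcomm : ∀ x ∈ A, ∀ y ∈ A, x * y = y * x := aux_comm_closure B hBcomm
  have hAcl : IsClosed (A : Set G) := B.isClosed_topologicalClosure
  have hproper : IsProperMap f :=
    isProperMap_iff_isCompact_preimage.mpr ⟨hcont, fun K hK => hcomp K hK⟩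
  have himgcl : IsClosed (f '' (A : Set G)) := hproper.isClosedMap _ hAcl
  set R : AddSubgroup ℝ :=
    { carrier := f '' (A : Set G)
      zero_mem' := ⟨1, A.one_mem, f_one⟩
      add_mem' := by
        rintro x y ⟨a, ha, rfl⟩ ⟨b, hb, rfl⟩
        exact ⟨a * b, A.mul_mem ha hb, f_mul a b⟩
      neg_mem' := by
        rintro x ⟨a, ha, rfl⟩
        exact ⟨a⁻¹, A.inv_mem ha, f_inv a⟩ } with hR
  have hsn : ∀ n : ℕ, ((1:ℝ)/2)^n ∈ R := by
    intro n
    exact ⟨s n, B.le_topologicalClosure (Subgroup.subset_closure ⟨n, rfl⟩), hs1 n⟩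
  have hRuniv : (R : Set ℝ) = univ := by
    rcases R.dense_or_cyclic with hdense | ⟨a, ha⟩
    · have h1 : closure (R : Set ℝ) = (R : Set ℝ) := himgcl.closure_eq
      rw [← hdense.closure_eq, h1]
    · exfalso
      by_cases ha0 : a = 0
      · subst ha0
        have h1 := hsn 0
        rw [ha] at h1
        rw [AddSubgroup.mem_closure_singleton] at h1
        obtain ⟨k, hk⟩ := h1
        simp at hk
      · obtain ⟨n, hn⟩ := exists_pow_lt_of_lt_one (abs_pos.mpr ha0) (by norm_num : (1:ℝ)/2 < 1)
        have h1 := hsn n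
        rw [ha, AddSubgroup.mem_closure_singleton] at h1
        obtain ⟨k, hk⟩ := h1
        have hkne : k ≠ 0 := by
          rintro rfl
          rw [zero_zsmul] at hk
          have : (0:ℝ) < (1/2)^n := by positivity
          rw [← hk] at this
          exact lt_irrefl _ this
        have habs : |a| ≤ |(k : ℝ) * a| := by
          rw [abs_mul]
          have : (1:ℝ) ≤ |(k:ℝ)| := by
            rw [← Int.cast_abs]
            exact_mod_cast Int.one_le_abs hkne
          nlinarith [abs_nonneg a]
        rw [zsmul_eq_mul] at hk
        rw [hk] at habs
        have hpos : (0:ℝ) < (1/2)^n := by positivity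
        rw [abs_of_pos hpos] at habs
        linarith
  have hsurjA : ∀ r : ℝ, ∃ g, g ∈ A ∧ f g = r := by
    intro r
    have : r ∈ (R : Set ℝ) := by rw [hRuniv]; trivial
    obtain ⟨g, hg, hfg⟩ := this
    exact ⟨g, hg, hfg⟩
  have hfibc : ∀ r : ℝ, IsCompact ((A : Set G) ∩ f ⁻¹' {r}) :=
    fun r => (hcomp _ isCompact_singleton).inter_left hAcl
  have key : (Set.pi univ (fun r : ℝ => (A : Set G) ∩ f ⁻¹' {r}) ∩
      ⋂ p : ℝ × ℝ, {s : ℝ → G | s (p.1 + p.2) = s p.1 * s p.2}).Nonempty := by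
    refine (isCompact_univ_pi hfibc).inter_iInter_nonempty _ (fun p => isClosed_eq
      (continuous_apply (p.1 + p.2)) ((continuous_apply p.1).mul (continuous_apply p.2))) ?_
    intro u
    set T : Finset ℝ := u.image Prod.fst ∪ u.image Prod.snd with hT
    obtain ⟨s0, hs0mem, hs0hom⟩ := aux_free_section f f_mul A hAcomm hsurjA T
    refine ⟨s0, ?_, ?_⟩
    · rw [Set.mem_univ_pi]
      intro r
      exact ⟨(hs0mem r).1, (hs0mem r).2⟩
    · simp only [Set.mem_iInter, Set.mem_setOf_eq]
      intro p hp
      have hr : p.1 ∈ AddSubgroup.closure (T : Set ℝ) := by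
        apply AddSubgroup.subset_closure
        simp only [hT, Finset.coe_union, Set.mem_union, Finset.coe_image, Set.mem_image]
        exact Or.inl ⟨p, hp, rfl⟩
      have hr' : p.2 ∈ AddSubgroup.closure (T : Set ℝ) := by
        apply AddSubgroup.subset_closure
        simp only [hT, Finset.coe_union, Set.mem_union, Finset.coe_image, Set.mem_image]
        exact Or.inr ⟨p, hp, rfl⟩
      exact hs0hom p.1 hr p.2 hr'
  obtain ⟨sec, hsec1, hsec2⟩ := key
  rw [Set.mem_univ_pi] at hsec1
  simp only [Set.mem_iInter, Set.mem_setOf_eq] at hsec2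
  have hsechom : ∀ r r' : ℝ, sec (r + r') = sec r * sec r' := fun r r' => hsec2 (r, r')
  have hsec_one : sec 0 = 1 := by
    have := hsechom 0 0
    rw [add_zero] at this
    exact (left_eq_mul.mp this)
  refine ⟨{ toFun := fun r => sec (Multiplicative.toAdd r)
            map_one' := hsec_one
            map_mul' := fun a b => by simp [hsechom] }, ?_⟩
  intro r
  have := (hsec1 (Multiplicative.toAdd r)).2
  simp only [Set.mem_preimage, Set.mem_singleton_iff] at this
  apply Multiplicative.toAdd.injective
  exact this

end Aux

/-- a Lie group acting smoothly and properly on ℝ by translations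
(via the homomorphism `c`) has compact kernel `N = ker c`, and is isomorphic to a
semidirect product `N ⋊ L` with `L` trivial, `ℤ`, or `ℝ`. -/
theorem stmt_1 {E : Type*} [NormedAddCommGroup E] [NormedSpace ℝ E]
    {H : Type*} [TopologicalSpace H] (I : ModelWithCorners ℝ E H)
    {G : Type*} [Group G] [TopologicalSpace G] [IsTopologicalGroup G]
    [ChartedSpace H G] [LieGroup I (⊤ : ℕ∞) G]
    (c : G →* Multiplicative ℝ)
    (hsmooth : ContMDiff I 𝓘(ℝ, ℝ) (⊤ : ℕ∞) fun g : G => Multiplicative.toAdd (c g))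
    (hproper : ∀ K : Set ℝ, IsCompact K →
      IsCompact {g : G | ∃ x ∈ K, x + Multiplicative.toAdd (c g) ∈ K}) :
    IsCompact (c.ker : Set G) ∧ c.ker.Normal ∧
      (Nonempty (G ≃* c.ker) ∨
        (∃ Ψ : Multiplicative ℤ →* MulAut c.ker,
          Nonempty (G ≃* c.ker ⋊[Ψ] Multiplicative ℤ)) ∨
        (∃ Ψ : Multiplicative ℝ →* MulAut c.ker,
          Nonempty (G ≃* c.ker ⋊[Ψ] Multiplicative ℝ))) := by
  classical
  haveI : T1Space G := I.t1Space G
  haveI : T2Space G := IsTopologicalGroup.t2Space_iff_one_closed.mpr isClosed_singleton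
  set f : G → ℝ := fun g => Multiplicative.toAdd (c g) with hf
  have hcont : Continuous f := hsmooth.continuous
  have f_mul : ∀ g h : G, f (g * h) = f g + f h := by intro g h; simp [hf]
  have f_one : f 1 = 0 := by simp [hf]
  have f_inv : ∀ g : G, f g⁻¹ = - f g := by intro g; simp [hf]
  have f_zpow : ∀ (g : G) (z : ℤ), f (g ^ z) = z * f g := by
    intro g z; simp [hf, toAdd_zpow, zsmul_eq_mul]
  have hfker : ∀ g : G, (g ∈ c.ker ↔ f g = 0) := by
    intro g
    rw [MonoidHom.mem_ker]
    constructor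
    · intro h; simp [hf, h]
    · intro h
      have : Multiplicative.toAdd (c g) = Multiplicative.toAdd (1 : Multiplicative ℝ) := by
        exact h
      exact Multiplicative.toAdd.injective this
  -- compact preimages of compact sets
  have hcomp : ∀ K : Set ℝ, IsCompact K → IsCompact (f ⁻¹' K) := by
    intro K hK
    have h1 : IsCompact {g : G | ∃ x ∈ K ∪ {0}, x + f g ∈ K ∪ {0}} :=
      hproper _ (hK.union isCompact_singleton)
    refine h1.of_isClosed_subset (hK.isClosed.preimage hcont) ?_
    intro g hg
    exact ⟨0, Or.inr rfl, by rw [zero_add]; exact Or.inl hg⟩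
  -- kernel is compact
  have hkerc : IsCompact (c.ker : Set G) := by
    have h1 := hcomp {0} isCompact_singleton
    have h2 : (c.ker : Set G) = f ⁻¹' {0} := by
      ext g; simpa using hfker g
    rw [h2]
    exact h1
  refine ⟨hkerc, c.normal_ker, ?_⟩
  -- the range of f as a closed subgroup of ℝ
  have hproperMap : IsProperMap f :=
    isProperMap_iff_isCompact_preimage.mpr ⟨hcont, fun K hK => hcomp K hK⟩
  set R : AddSubgroup ℝ :=
    { carrier := Set.range f
      zero_mem' := ⟨1, f_one⟩
      add_mem' := by
        rintro x y ⟨a, rfl⟩ ⟨b, rfl⟩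
        exact ⟨a * b, f_mul a b⟩
      neg_mem' := by
        rintro x ⟨a, rfl⟩
        exact ⟨a⁻¹, f_inv a⟩ } with hR
  have hRcl : IsClosed (R : Set ℝ) := hproperMap.isClosedMap.isClosed_range
  rcases R.dense_or_cyclic with hdense | ⟨a, ha⟩
  · -- f is surjective: the ℝ case
    have hsurj : ∀ r : ℝ, ∃ g : G, f g = r := by
      intro r
      have h1 : closure (R : Set ℝ) = (R : Set ℝ) := hRcl.closure_eq
      have : r ∈ (R : Set ℝ) := by rw [← h1, hdense.closure_eq]; trivial
      exact this
    obtain ⟨σ, hσ⟩ := aux_section c hcont hcomp hsurj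
    exact Or.inr (Or.inr (aux_splitting c σ hσ))
  · by_cases ha0 : a = 0
    · -- trivial range: G = ker c
      subst ha0
      have hker0 : ∀ g : G, f g = 0 := by
        intro g
        have : f g ∈ R := ⟨g, rfl⟩
        rw [ha, AddSubgroup.mem_closure_singleton] at this
        obtain ⟨k, hk⟩ := this
        simpa using hk.symm
      have hktop : c.ker = ⊤ := by
        ext g
        simp only [Subgroup.mem_top, iff_true]
        exact (hfker g).mpr (hker0 g)
      exact Or.inl ⟨Subgroup.topEquiv.symm.trans (MulEquiv.subgroupCongr hktop.symm)⟩
    · -- cyclic range: the ℤ case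
      have haR : a ∈ R := by
        rw [ha]; exact AddSubgroup.subset_closure rfl
      obtain ⟨g₀, hg₀⟩ := haR
      have hdiv : ∀ g : G, ∃ k : ℤ, f g = (k : ℝ) * a ∧ ⌊f g / a⌋ = k := by
        intro g
        have : f g ∈ R := ⟨g, rfl⟩
        rw [ha, AddSubgroup.mem_closure_singleton] at this
        obtain ⟨k, hk⟩ := this
        rw [zsmul_eq_mul] at hk
        refine ⟨k, hk.symm, ?_⟩
        rw [← hk, mul_div_assoc, div_self ha0, mul_one, Int.floor_intCast]
      set d : G →* Multiplicative ℤ :=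
        { toFun := fun g => Multiplicative.ofAdd ⌊f g / a⌋
          map_one' := by
            show Multiplicative.ofAdd ⌊f 1 / a⌋ = 1
            rw [f_one, zero_div, Int.floor_zero]
            rfl
          map_mul' := fun g h => by
            show Multiplicative.ofAdd ⌊f (g * h) / a⌋ =
              Multiplicative.ofAdd ⌊f g / a⌋ * Multiplicative.ofAdd ⌊f h / a⌋
            obtain ⟨k, hk, hfk⟩ := hdiv g
            obtain ⟨k', hk', hfk'⟩ := hdiv h
            have : f (g * h) = ((k + k' : ℤ) : ℝ) * a := by
              rw [f_mul, hk, hk']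
              push_cast
              ring
            rw [this, mul_div_assoc, div_self ha0, mul_one, Int.floor_intCast, hfk, hfk']
            rw [← ofAdd_add] } with hd
      set σ₂ : Multiplicative ℤ →* G := zpowersHom G g₀ with hσ₂def
      have hσ₂ : ∀ m : Multiplicative ℤ, d (σ₂ m) = m := by
        intro m
        obtain ⟨z, rfl⟩ : ∃ z : ℤ, Multiplicative.ofAdd z = m := ⟨Multiplicative.toAdd m, rfl⟩
        show Multiplicative.ofAdd ⌊f (g₀ ^ z) / a⌋ = Multiplicative.ofAdd z
        rw [f_zpow, hg₀, mul_div_assoc, div_self ha0, mul_one, Int.floor_intCast]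
      have hkerd : d.ker = c.ker := by
        ext g
        rw [MonoidHom.mem_ker, hfker g]
        obtain ⟨k, hk, hfk⟩ := hdiv g
        show Multiplicative.ofAdd ⌊f g / a⌋ = 1 ↔ f g = 0
        rw [hfk]
        constructor
        · intro h
          have hk0 : k = 0 := by
            have := congrArg Multiplicative.toAdd h
            simpa using this
          rw [hk, hk0]
          simp
        · intro h
          rw [h] at hk
          have : (k : ℝ) = 0 := by
            rcases mul_eq_zero.mp hk.symm with h1 | h2
            · exact h1
            · exact absurd h2 ha0
          have : k = 0 := by exact_mod_cast this
          rw [this]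
          rfl
      obtain ⟨Ψ, hΨ⟩ := aux_splitting d σ₂ hσ₂
      exact Or.inr (Or.inl (hkerd ▸ ⟨Ψ, hΨ⟩))
end

section
/- Consider the Lorentzian product metric g = −dt² + h on M = ℝ × Σ, where (Σ, h) is a compact Riemannian manifold. Let γ(s) = (s, x₀) be a vertical line and σ(s) = (a·s + t₀, x(s)) a unit-speed timelike geodesic of (M,g) (so that a² − h(ẋ,ẋ) = 1 with a > 0) which maximizes the Lorentzian distance between all pairs of its points, i.e., d_g(σ(s), σ(s')) = |s' − s| for all s ≤ s'. Then a = 1 and x(s) is constant; that is, σ is itself a vertical line. -/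
/-- in a Lorentzian product `ℝ × Σ` with `Σ` compact, a unit-speed
timelike geodesic `σ(s) = (a·s + t₀, x(s))` (with `a > 0`, `x` of constant speed)
which maximizes the Lorentzian distance between all pairs of its points, i.e.
`d_g(σ(s), σ(s')) = sqrt((a(s'-s))² − d_h(x(s), x(s'))²) = s' − s` for `s ≤ s'`,
must be a vertical line: `a = 1` and `x` constant. -/
theorem stmt_11 {S : Type*} [MetricSpace S] [CompactSpace S] [Nonempty S]
    (a b t₀ : ℝ) (ha : 0 < a) (x : ℝ → S)
    (hspeed : ∀ s s' : ℝ, dist (x s) (x s') ≤ b * |s' - s|)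
    (hunit : a ^ 2 - b ^ 2 = 1)
    (hmax : ∀ s s' : ℝ, s ≤ s' →
      Real.sqrt ((a * (s' - s)) ^ 2 - dist (x s) (x s') ^ 2) = s' - s) :
    a = 1 ∧ ∀ s s' : ℝ, x s = x s' := by
  have hb0 : 0 ≤ b := by
    have := hspeed 0 1
    simp at this
    linarith [dist_nonneg (x := x 0) (y := x 1)]
  -- key: for s ≤ s', dist (x s) (x s') = b * (s' - s)
  have key : ∀ s s' : ℝ, s ≤ s' → dist (x s) (x s') = b * (s' - s) := by
    intro s s' hss
    have hΔ : 0 ≤ s' - s := by linarith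
    have hbd : 0 ≤ b * (s' - s) := mul_nonneg hb0 hΔ
    have hd : dist (x s) (x s') ≤ b * (s' - s) := by
      have := hspeed s s'
      rwa [abs_of_nonneg hΔ] at this
    have hdn : 0 ≤ dist (x s) (x s') := dist_nonneg
    have hdsq : dist (x s) (x s') ^ 2 ≤ (b * (s' - s)) ^ 2 := by nlinarith
    have hX : 0 ≤ (a * (s' - s)) ^ 2 - dist (x s) (x s') ^ 2 := by nlinarith
    have h1 := hmax s s' hss
    have h2 : (a * (s' - s)) ^ 2 - dist (x s) (x s') ^ 2 = (s' - s) ^ 2 := by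
      have := Real.sq_sqrt hX
      rw [h1] at this
      linarith
    have hd2 : dist (x s) (x s') ^ 2 = (b * (s' - s)) ^ 2 := by nlinarith
    nlinarith [sq_nonneg (dist (x s) (x s') - b * (s' - s)),
      sq_nonneg (dist (x s) (x s') + b * (s' - s))]
  -- b = 0 by compactness (bounded diameter)
  have hbound : ∃ C : ℝ, ∀ p q : S, dist p q ≤ C := by
    obtain ⟨C, hC⟩ := (isCompact_univ (X := S)).isBounded.subset_closedBall (Classical.arbitrary S)
    exact ⟨2 * C, fun p q => by
      have hp := hC (Set.mem_univ p)
      have hq := hC (Set.mem_univ q)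
      simp [Metric.mem_closedBall] at hp hq
      calc dist p q ≤ dist p (Classical.arbitrary S) + dist (Classical.arbitrary S) q :=
            dist_triangle _ _ _
        _ ≤ 2 * C := by rw [dist_comm (Classical.arbitrary S) q]; linarith⟩
  obtain ⟨C, hC⟩ := hbound
  have hC0 : 0 ≤ C := le_trans dist_nonneg (hC (x 0) (x 0))
  have hbz : b = 0 := by
    by_contra hb
    have hbpos : 0 < b := lt_of_le_of_ne hb0 (Ne.symm hb)
    have hΔpos : (0:ℝ) ≤ (C + 1) / b := by positivity
    have h := key 0 ((C + 1) / b) hΔpos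
    have hle := hC (x 0) (x ((C + 1) / b))
    rw [h] at hle
    have heq : b * ((C + 1) / b - 0) = C + 1 := by field_simp; ring
    linarith
  have ha1 : a = 1 := by nlinarith
  refine ⟨ha1, fun s s' => ?_⟩
  rcases le_total s s' with h | h
  · have := key s s' h; rw [hbz] at this; simp at this
    exact this
  · have := key s' s h; rw [hbz] at this; simp at this
    exact this.symm
end
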